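/- Fix x > 0 and γ > 0. The function φ₂(α) = ₁F₂(α; α+1, γ; -x) has k-th derivative, for k ≥ 1, given by dᵏφ₂/dαᵏ = ((-1)^k k! x/((α+1)^{k+1} γ)) · ₍k+1₎F₍k+2₎(α+1,…,α+1; α+2,…,α+2, γ+1; -x), where α+1 appears k+1 times as a numerator parameter and α+2 appears k+1 times as a denominator parameter. -/

import Mathlib

/-!
Since `(α)ₙ / (α + 1)ₙ = α / (α + n) = 1 - n / (α + n)`, the function `φ₂` is the constant
`₀F₁(; γ; -x)` plus `∑ cₙ · (-n / (α + n))`, where `cₙ` are the terms of `₀F₁(; γ; -x)`. The `k`-th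
derivative of `-n / (α + n)` is `(-1)^(k+1) k! n / (α + n)^(k+1)`, bounded by `k!` for `α > 0`, so
the series may be differentiated termwise. Its `n = 0` term vanishes, and after the shift
`n ↦ n + 1` the identities `Γ(γ) / Γ(γ + n + 1) = Γ(γ + 1) / (γ Γ(γ + 1 + n))` and
`(α + 1) / (α + 1 + n) = (α + 1)ₙ / (α + 2)ₙ` turn it into the stated `ₖ₊₁Fₖ₊₂` series.
-/
open Real

/-- Generalized hypergeometric function ₁F₂. -/
noncomputable def hyp1F2 (a b c x : ℝ) : ℝ :=
  ∑' n : ℕ, (Real.Gamma (a + n) / Real.Gamma a) * (Real.Gamma b / Real.Gamma (b + n)) *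
    (Real.Gamma c / Real.Gamma (c + n)) * x ^ n / (n.factorial : ℝ)

/-- The generalized hypergeometric function
₍k+1₎F₍k+2₎(α+1,…,α+1; α+2,…,α+2, γ+1; x), where α+1 appears k+1 times in the numerator
and α+2 appears k+1 times in the denominator. -/
noncomputable def hypKp1Fkp2 (k : ℕ) (α γ x : ℝ) : ℝ :=
  ∑' n : ℕ,
    ((Real.Gamma (α + 1 + n) / Real.Gamma (α + 1)) *
        (Real.Gamma (α + 2) / Real.Gamma (α + 2 + n))) ^ (k + 1) *
      (Real.Gamma (γ + 1) / Real.Gamma (γ + 1 + n)) * x ^ n / (n.factorial : ℝ)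

open Set

theorem iteratedDeriv_tsum_eqOn_of_hasDerivAt {ι 𝕜 F : Type*} [NontriviallyNormedField 𝕜]
    [IsRCLikeNormedField 𝕜] [NormedAddCommGroup F] [CompleteSpace F] [NormedSpace 𝕜 F]
    {s : Set 𝕜} (hs : IsOpen s) (hs' : IsPreconnected s) {f : ℕ → ι → 𝕜 → F} {u : ℕ → ι → ℝ}
    (hf : ∀ k i, ∀ y ∈ s, HasDerivAt (f k i) (f (k + 1) i y) y)
    (hu : ∀ k, Summable (u k)) (hfu : ∀ k i, ∀ y ∈ s, ‖f k i y‖ ≤ u k i) (k : ℕ) :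
    EqOn (iteratedDeriv k fun y ↦ ∑' i, f 0 i y) (fun y ↦ ∑' i, f k i y) s := by
  induction k with
  | zero => simp [EqOn]
  | succ k ih =>
    intro y hy
    rw [iteratedDeriv_succ,
      Filter.EventuallyEq.deriv_eq (Filter.eventuallyEq_of_mem (hs.mem_nhds hy) ih)]
    exact (hasDerivAt_tsum_of_isPreconnected (hu (k + 1)) hs hs' (hf k) (hfu (k + 1)) hy
      (.of_norm_bounded (hu k) fun i ↦ hfu k i y hy) hy).deriv

theorem Real.Gamma_le_Gamma_add_nat {s : ℝ} (hs : 1 ≤ s) (n : ℕ) : Gamma s ≤ Gamma (s + n) := by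
  induction n with
  | zero => simp
  | succ n ih =>
    have hsn : 1 ≤ s + n := by linarith [n.cast_nonneg (α := ℝ)]
    rw [Nat.cast_succ, ← add_assoc, Gamma_add_one (by linarith)]
    exact ih.trans (le_mul_of_one_le_left (Gamma_pos_of_pos (by linarith)).le hsn)

theorem Real.Gamma_div_Gamma_add_nat_le {γ : ℝ} (hγ : 0 < γ) (n : ℕ) :
    Gamma γ / Gamma (γ + n) ≤ max 1 γ⁻¹ := by
  have hΓ := Gamma_pos_of_pos hγ
  rcases n with _ | n
  · simp [hΓ.ne']
  · have hle := Gamma_le_Gamma_add_nat (s := γ + 1) (by linarith) n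
    rw [Gamma_add_one hγ.ne', add_right_comm, add_assoc, ← Nat.cast_succ] at hle
    rw [div_le_iff₀ (Gamma_pos_of_pos (by positivity))]
    calc Gamma γ = γ⁻¹ * (γ * Gamma γ) := by field_simp
      _ ≤ max 1 γ⁻¹ * Gamma (γ + ↑(n + 1)) := by gcongr; exact le_max_right _ _

theorem Real.Gamma_add_nat_div_mul_Gamma_add_one_div {b : ℝ} (hb : 0 < b) (n : ℕ) :
    Gamma (b + n) / Gamma b * (Gamma (b + 1) / Gamma (b + 1 + n)) = b / (b + n) := by
  have hbn : 0 < b + n := by positivity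
  rw [show b + 1 + n = b + n + 1 by ring, Gamma_add_one hb.ne', Gamma_add_one hbn.ne']
  have := Gamma_pos_of_pos hb
  have := Gamma_pos_of_pos hbn
  field_simp

noncomputable def hyp0F1Term (γ x : ℝ) (n : ℕ) : ℝ :=
  Gamma γ / Gamma (γ + n) * x ^ n / n.factorial

theorem summable_norm_hyp0F1Term {γ : ℝ} (hγ : 0 < γ) (x : ℝ) :
    Summable fun n ↦ ‖hyp0F1Term γ x n‖ := by
  refine .of_nonneg_of_le (fun _ ↦ norm_nonneg _) (fun n ↦ ?_)
    ((summable_pow_div_factorial |x|).mul_left (max 1 γ⁻¹))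
  have hΓ : 0 < Gamma γ / Gamma (γ + n) :=
    div_pos (Gamma_pos_of_pos hγ) (Gamma_pos_of_pos (by positivity))
  rw [hyp0F1Term, mul_div_assoc, Real.norm_eq_abs, abs_mul, abs_of_pos hΓ, abs_div, abs_pow,
    Nat.abs_cast]
  gcongr
  exact Gamma_div_Gamma_add_nat_le hγ n

/-- For `k ≥ 1` this is the `k`-th derivative of `a ↦ a / (a + n)`; for `k = 0` it is
`a / (a + n) - 1`. -/
noncomputable def ratioDeriv (k n : ℕ) (a : ℝ) : ℝ :=
  (-1) ^ (k + 1) * k.factorial * n / (a + n) ^ (k + 1)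

theorem div_add_natCast_eq_one_add_ratioDeriv_zero {a : ℝ} {n : ℕ} (h : a + n ≠ 0) :
    a / (a + n) = 1 + ratioDeriv 0 n a := by
  rw [ratioDeriv]
  field_simp
  ring

theorem hasDerivAt_ratioDeriv {a : ℝ} {n : ℕ} (h : a + n ≠ 0) (k : ℕ) :
    HasDerivAt (ratioDeriv k n) (ratioDeriv (k + 1) n a) a := by
  have hpow : HasDerivAt (fun b : ℝ ↦ (b + n) ^ (k + 1)) ((k + 1) * (a + n) ^ k) a := by
    simpa using ((hasDerivAt_id a).add_const (n : ℝ)).fun_pow (k + 1)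
  refine ((hasDerivAt_const a ((-1 : ℝ) ^ (k + 1) * k.factorial * n)).fun_div hpow
    (pow_ne_zero _ h)).congr_deriv ?_
  simp only [ratioDeriv, Nat.factorial_succ]
  push_cast
  field_simp
  ring

theorem norm_ratioDeriv_le {a : ℝ} (ha : 0 ≤ a) (k n : ℕ) : ‖ratioDeriv k n a‖ ≤ k.factorial := by
  rcases n.eq_zero_or_pos with rfl | hn
  · simp [ratioDeriv]
  have h1 : (1 : ℝ) ≤ a + n := by
    have : (1 : ℝ) ≤ n := by exact_mod_cast hn
    linarith
  rw [ratioDeriv, norm_div, norm_mul, norm_mul, norm_pow, norm_neg, norm_one, one_pow, one_mul,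
    RCLike.norm_natCast, RCLike.norm_natCast, norm_pow, Real.norm_of_nonneg (by linarith),
    div_le_iff₀ (by positivity)]
  gcongr
  calc (n : ℝ) ≤ a + n := by linarith
    _ ≤ (a + n) ^ (k + 1) := le_self_pow₀ h1 (by omega)

theorem norm_hyp0F1Term_mul_ratioDeriv_le {a : ℝ} (ha : 0 ≤ a) (γ x : ℝ) (k n : ℕ) :
    ‖hyp0F1Term γ x n * ratioDeriv k n a‖ ≤ ‖hyp0F1Term γ x n‖ * k.factorial := by
  rw [norm_mul]
  exact mul_le_mul_of_nonneg_left (norm_ratioDeriv_le ha k n) (norm_nonneg _)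

theorem summable_hyp0F1Term_mul_ratioDeriv {γ a : ℝ} (hγ : 0 < γ) (ha : 0 ≤ a) (x : ℝ) (k : ℕ) :
    Summable fun n ↦ hyp0F1Term γ x n * ratioDeriv k n a :=
  .of_norm_bounded ((summable_norm_hyp0F1Term hγ x).mul_right _)
    (norm_hyp0F1Term_mul_ratioDeriv_le ha γ x k)

theorem hyp1F2_self_add_one {γ a : ℝ} (hγ : 0 < γ) (ha : 0 < a) (x : ℝ) :
    hyp1F2 a (a + 1) γ x =
      ∑' n, hyp0F1Term γ x n + ∑' n, hyp0F1Term γ x n * ratioDeriv 0 n a := by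
  rw [← ((summable_norm_hyp0F1Term hγ x).of_norm).tsum_add
    (summable_hyp0F1Term_mul_ratioDeriv hγ ha.le x 0)]
  refine tsum_congr fun n ↦ ?_
  rw [← mul_one_add, ← div_add_natCast_eq_one_add_ratioDeriv_zero (by positivity),
    ← Gamma_add_nat_div_mul_Gamma_add_one_div ha n, hyp0F1Term]
  ring

theorem eqOn_iteratedDeriv_tsum_hyp0F1Term_mul_ratioDeriv {γ : ℝ} (hγ : 0 < γ) (x : ℝ) (k : ℕ) :
    EqOn (iteratedDeriv k fun a ↦ ∑' n, hyp0F1Term γ x n * ratioDeriv 0 n a)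
      (fun a ↦ ∑' n, hyp0F1Term γ x n * ratioDeriv k n a) (Ioi 0) :=
  iteratedDeriv_tsum_eqOn_of_hasDerivAt (f := fun k n a ↦ hyp0F1Term γ x n * ratioDeriv k n a)
    isOpen_Ioi isPreconnected_Ioi
    (fun k n a (ha : 0 < a) ↦ (hasDerivAt_ratioDeriv (by positivity) k).const_mul _)
    (fun k ↦ (summable_norm_hyp0F1Term hγ x).mul_right (k.factorial : ℝ))
    (fun k n a (ha : 0 < a) ↦ norm_hyp0F1Term_mul_ratioDeriv_le ha.le γ x k n) k

theorem hyp0F1Term_succ_mul_ratioDeriv {γ α : ℝ} (hγ : 0 < γ) (hα : 0 < α) (x : ℝ) (k n : ℕ) :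
    hyp0F1Term γ x (n + 1) * ratioDeriv k (n + 1) α =
      (-1) ^ (k + 1) * k.factorial * x / ((α + 1) ^ (k + 1) * γ) *
        ((Gamma (α + 1 + n) / Gamma (α + 1) * (Gamma (α + 2) / Gamma (α + 2 + n))) ^ (k + 1) *
          (Gamma (γ + 1) / Gamma (γ + 1 + n)) * x ^ n / n.factorial) := by
  have hα2 : α + 2 = α + 1 + 1 := by ring
  have hαn : α + ((n + 1 : ℕ) : ℝ) = α + 1 + n := by push_cast; ring
  have hγn : γ + ((n + 1 : ℕ) : ℝ) = γ + 1 + n := by push_cast; ring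
  have := Gamma_pos_of_pos hγ
  have := Gamma_pos_of_pos (show 0 < γ + 1 + n by positivity)
  have : 0 < α + 1 + n := by positivity
  rw [hα2, Gamma_add_nat_div_mul_Gamma_add_one_div (by positivity), div_pow, hyp0F1Term,
    ratioDeriv, hαn, hγn, Gamma_add_one hγ.ne', Nat.factorial_succ]
  push_cast
  field_simp
  ring

theorem tsum_hyp0F1Term_mul_ratioDeriv {γ α : ℝ} (hγ : 0 < γ) (hα : 0 < α) (x : ℝ) (k : ℕ) :
    ∑' n, hyp0F1Term γ x n * ratioDeriv k n α =
      (-1) ^ (k + 1) * k.factorial * x / ((α + 1) ^ (k + 1) * γ) * hypKp1Fkp2 k α γ x := by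
  rw [hypKp1Fkp2, ← tsum_mul_left,
    (summable_hyp0F1Term_mul_ratioDeriv hγ hα.le x k).tsum_eq_zero_add]
  simp only [ratioDeriv, Nat.cast_zero, mul_zero, zero_div, zero_add]
  exact tsum_congr (hyp0F1Term_succ_mul_ratioDeriv hγ hα x k)

theorem hyp1F2_deriv_in_alpha_general
    (x γ : ℝ) (hγ : 0 < γ) (k : ℕ) (hk : 1 ≤ k) (α : ℝ) (hα : 0 < α) :
    iteratedDeriv k (fun a : ℝ => hyp1F2 a (a + 1) γ (-x)) α =
      ((-1 : ℝ) ^ k * (k.factorial : ℝ) * x / ((α + 1) ^ (k + 1) * γ)) *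
        hypKp1Fkp2 k α γ (-x) := by
  have hφ : EqOn (fun a ↦ hyp1F2 a (a + 1) γ (-x))
      (fun a ↦ ∑' n, hyp0F1Term γ (-x) n + ∑' n, hyp0F1Term γ (-x) n * ratioDeriv 0 n a)
      (Ioi 0) :=
    fun a ha ↦ hyp1F2_self_add_one hγ ha (-x)
  rw [hφ.iteratedDeriv_of_isOpen isOpen_Ioi k hα, iteratedDeriv_const_add hk,
    eqOn_iteratedDeriv_tsum_hyp0F1Term_mul_ratioDeriv hγ (-x) k hα]
  dsimp only
  rw [tsum_hyp0F1Term_mul_ratioDeriv hγ hα]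
  ring

/-- k-th derivative in α of φ₂(α) = ₁F₂(α; α+1, γ; -x). -/
theorem hyp1F2_deriv_in_alpha
    (x γ : ℝ) (hx : 0 < x) (hγ : 0 < γ) (k : ℕ) (hk : 1 ≤ k) (α : ℝ) (hα : 0 < α) :
    iteratedDeriv k (fun a : ℝ => hyp1F2 a (a + 1) γ (-x)) α =
      ((-1 : ℝ) ^ k * (k.factorial : ℝ) * x / ((α + 1) ^ (k + 1) * γ)) *
        hypKp1Fkp2 k α γ (-x) :=
  hyp1F2_deriv_in_alpha_general x γ hγ k hk α hα
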